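/- arXiv:2201.11746 — 4 statements merged into one kernel-verified Lean document; each statement's English description precedes it below -/
import Mathlib

section
/- Let f(z) = Σ a_n z^n be a nonconstant power series with nonnegative coefficients, a_0 > 0, and radius of convergence R ∈ (0,∞]. Let M_f = lim_{t↑R} t f'(t)/f(t) (the limit of the mean function of the Khinchin family). Then M_f < ∞ if and only if either (R < ∞ and Σ n a_n R^n < ∞) or (R = ∞ and f is a polynomial). Moreover, in the first case M_f = (Σ n a_n R^n)/(Σ a_n R^n), and if f is a polynomial then M_f = deg(f). -/
open Filter Topology
open scoped ENNReal

/-! Write `f(t) = Σ aₙ tⁿ`. Since `Σ n aₙ tⁿ ≥ K Σ_{n ≥ K} aₙ tⁿ`, the mean function `m(t)` is at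
least `K / 2` as soon as the head `Σ_{n < K} aₙ tⁿ` is at most half of `f(t)`. This happens as
`t → R` whenever `f(t) → ∞`: at a finite `R` with `f(R) = ∞`, and at `R = ∞` for a non-polynomial
`f`. If `f(R) < ∞ = Σ n aₙ Rⁿ`, then instead `m(t) ≥ t f'(t) / f(R) → ∞`. When `Σ n aₙ Rⁿ < ∞`,
dominated convergence gives `m(t) → m(R)`, and for a polynomial of degree `N` the numerator and
denominator of `m(t)` are asymptotic to `N a_N tᴺ` and `a_N tᴺ`. -/

open Finset

noncomputable def meanFunction (a : ℕ → ℝ) (t : ℝ) : ℝ :=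
  (∑' n : ℕ, (n : ℝ) * a n * t ^ n) / ∑' n : ℕ, a n * t ^ n

section PowerSeries

variable {b : ℕ → ℝ} {t s r : ℝ}

lemma summable_natCast_mul_mul_pow_of_abs_lt (hts : |t| < s)
    (hs : Summable fun n => b n * s ^ n) : Summable fun n : ℕ => (n : ℝ) * b n * t ^ n := by
  have hs0 : 0 < s := (abs_nonneg t).trans_lt hts
  have hq : |t| / s < 1 := (div_lt_one hs0).2 hts
  refine hs.abs.of_norm_bounded_eventually_nat ?_
  filter_upwards [(tendsto_self_mul_const_pow_of_lt_one (by positivity) hq).eventually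
    (gt_mem_nhds one_pos)] with n hn
  calc ‖(n : ℝ) * b n * t ^ n‖ = (n * (|t| / s) ^ n) * |b n * s ^ n| := by
        rw [Real.norm_eq_abs, abs_mul, abs_mul, abs_mul, abs_pow, abs_pow, abs_of_pos hs0,
          Nat.abs_cast, div_pow]
        field_simp
    _ ≤ |b n * s ^ n| := mul_le_of_le_one_left (abs_nonneg _) hn.le

lemma summable_mul_pow_of_summable_natCast_mul
    (hs : Summable fun n : ℕ => (n : ℝ) * b n * t ^ n) : Summable fun n => b n * t ^ n := by
  refine hs.abs.of_norm_bounded_eventually_nat ?_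
  filter_upwards [eventually_ge_atTop 1] with n hn
  rw [Real.norm_eq_abs, mul_assoc, abs_mul (n : ℝ), Nat.abs_cast]
  exact le_mul_of_one_le_left (abs_nonneg _) (by exact_mod_cast hn)

lemma tendsto_tsum_mul_pow_nhdsLT (hr : 0 < r) (hs : Summable fun n => b n * r ^ n) :
    Tendsto (fun t => ∑' n, b n * t ^ n) (𝓝[<] r) (𝓝 (∑' n, b n * r ^ n)) := by
  refine tendsto_tsum_of_dominated_convergence hs.abs (fun n => ?_) ?_
  · exact ((continuous_const.mul (continuous_pow n)).tendsto r).mono_left nhdsWithin_le_nhds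
  · filter_upwards [Ioo_mem_nhdsLT hr] with t ⟨ht, htr⟩ n
    rw [Real.norm_eq_abs, abs_mul, abs_mul, abs_pow, abs_pow, abs_of_pos ht, abs_of_pos hr]
    gcongr

lemma tendsto_tsum_mul_pow_nhdsLT_atTop (hb : ∀ n, 0 ≤ b n) (hr : 0 < r)
    (hconv : ∀ t, 0 < t → t < r → Summable fun n => b n * t ^ n)
    (hdiv : ¬Summable fun n => b n * r ^ n) :
    Tendsto (fun t => ∑' n, b n * t ^ n) (𝓝[<] r) atTop := by
  have hpartial : Tendsto (fun J => ∑ n ∈ range J, b n * r ^ n) atTop atTop :=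
    (not_summable_iff_tendsto_nat_atTop_of_nonneg
      fun n => mul_nonneg (hb n) (pow_nonneg hr.le n)).1 hdiv
  refine tendsto_atTop.2 fun C => ?_
  obtain ⟨J, hJ⟩ := (hpartial.eventually_gt_atTop C).exists
  have hcont : Continuous fun t : ℝ => ∑ n ∈ range J, b n * t ^ n := by fun_prop
  filter_upwards [((hcont.tendsto r).mono_left nhdsWithin_le_nhds).eventually (lt_mem_nhds hJ),
    Ioo_mem_nhdsLT hr] with t hCt ⟨ht, htr⟩
  exact hCt.le.trans <|
    (hconv t ht htr).sum_le_tsum _ fun n _ => mul_nonneg (hb n) (pow_nonneg ht.le n)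

lemma tendsto_tsum_mul_pow_div_pow_atTop {N : ℕ} (hb : ∀ n, N < n → b n = 0) :
    Tendsto (fun t => (∑' n, b n * t ^ n) / t ^ N) atTop (𝓝 (b N)) := by
  -- the reversed polynomial `q u = uᴺ Σ bₙ u⁻ⁿ`
  set q : ℝ → ℝ := fun u => ∑ n ∈ range (N + 1), b n * u ^ (N - n)
  have hq0 : q 0 = b N := by
    simp only [q]
    rw [sum_eq_single_of_mem N (self_mem_range_succ N) fun n hn hne => ?_]
    · simp
    · rw [zero_pow (Nat.sub_ne_zero_of_lt (lt_of_le_of_ne (mem_range_succ_iff.1 hn) hne)),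
        mul_zero]
  have hq : Continuous q := by fun_prop
  refine (hq0 ▸ (hq.tendsto 0).comp tendsto_inv_atTop_zero).congr' ?_
  filter_upwards [eventually_gt_atTop 0] with t ht
  rw [tsum_eq_sum (s := range (N + 1)) fun n hn => by
    rw [hb n (by simpa using hn), zero_mul], sum_div]
  refine sum_congr rfl fun n hn => ?_
  dsimp only [Function.comp_apply]
  rw [← pow_sub_mul_pow t (mem_range_succ_iff.1 hn), inv_pow]
  field_simp

end PowerSeries

lemma exists_last_ne_zero {M : Type*} [Zero M] {a : ℕ → M} {i N : ℕ}
    (hi : a i ≠ 0) (hN : ∀ n, N < n → a n = 0) : ∃ D, a D ≠ 0 ∧ ∀ n, D < n → a n = 0 := by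
  classical
  refine ⟨Nat.findGreatest (a · ≠ 0) N,
    Nat.findGreatest_spec (P := (a · ≠ 0)) (le_of_not_gt fun h => hi (hN i h)) hi, fun n hn => ?_⟩
  by_cases hnN : n ≤ N
  · exact not_not.1 (Nat.findGreatest_is_greatest hn hnN)
  · exact hN n (not_le.1 hnN)

section MeanFunction

variable {a : ℕ → ℝ} {t r : ℝ}

lemma tsum_mul_pow_pos (ha : ∀ n, 0 ≤ a n) (ha0 : 0 < a 0) (ht : 0 ≤ t)
    (hs : Summable fun n => a n * t ^ n) : 0 < ∑' n, a n * t ^ n :=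
  hs.tsum_pos (fun n => mul_nonneg (ha n) (pow_nonneg ht n)) 0 (by simpa using ha0)

lemma natCast_mul_tsum_sub_sum_range_le (ha : ∀ n, 0 ≤ a n) (ht : 0 ≤ t)
    (h0 : Summable fun n => a n * t ^ n) (h1 : Summable fun n : ℕ => (n : ℝ) * a n * t ^ n)
    (K : ℕ) :
    K * ((∑' n, a n * t ^ n) - ∑ n ∈ range K, a n * t ^ n) ≤
      ∑' n : ℕ, (n : ℝ) * a n * t ^ n := by
  rw [← h0.sum_add_tsum_nat_add K, ← h1.sum_add_tsum_nat_add K, add_sub_cancel_left,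
    ← tsum_mul_left]
  calc ∑' n, (K : ℝ) * (a (n + K) * t ^ (n + K))
      ≤ ∑' n, ((n + K : ℕ) : ℝ) * a (n + K) * t ^ (n + K) :=
        (((summable_nat_add_iff K).2 h0).mul_left _).tsum_le_tsum
          (fun n => by rw [← mul_assoc]; gcongr; exacts [ha _, by simp])
          ((summable_nat_add_iff K).2 h1)
    _ ≤ _ := le_add_of_nonneg_left <| sum_nonneg fun n _ =>
        mul_nonneg (mul_nonneg n.cast_nonneg (ha n)) (pow_nonneg ht n)

lemma half_le_meanFunction (ha : ∀ n, 0 ≤ a n) (ht : 0 ≤ t)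
    (h0 : Summable fun n => a n * t ^ n) (h1 : Summable fun n : ℕ => (n : ℝ) * a n * t ^ n)
    (hpos : 0 < ∑' n, a n * t ^ n) {K : ℕ}
    (hK : 2 * ∑ n ∈ range K, a n * t ^ n ≤ ∑' n, a n * t ^ n) :
    (K : ℝ) / 2 ≤ meanFunction a t := by
  rw [meanFunction, le_div_iff₀ hpos]
  nlinarith [natCast_mul_tsum_sub_sum_range_le ha ht h0 h1 K, K.cast_nonneg (α := ℝ)]

lemma tendsto_meanFunction_atTop_of_two_mul_sum_range_le {l : Filter ℝ}
    (ha : ∀ n, 0 ≤ a n) (ha0 : 0 < a 0)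
    (hconv : ∀ᶠ t in l, 0 ≤ t ∧ Summable (fun n => a n * t ^ n) ∧
      Summable fun n : ℕ => (n : ℝ) * a n * t ^ n)
    (hhead : ∀ K : ℕ, ∀ᶠ t in l, 2 * ∑ n ∈ range K, a n * t ^ n ≤ ∑' n, a n * t ^ n) :
    Tendsto (meanFunction a) l atTop := by
  refine tendsto_atTop.2 fun C => ?_
  filter_upwards [hconv, hhead ⌈2 * C⌉₊] with t ⟨ht, h0, h1⟩ hK
  calc C ≤ (⌈2 * C⌉₊ : ℝ) / 2 := by linarith [Nat.le_ceil (2 * C)]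
    _ ≤ meanFunction a t := half_le_meanFunction ha ht h0 h1 (tsum_mul_pow_pos ha ha0 ht h0) hK

lemma tendsto_meanFunction_nhdsLT (ha : ∀ n, 0 ≤ a n) (ha0 : 0 < a 0) (hr : 0 < r)
    (hs : Summable fun n : ℕ => (n : ℝ) * a n * r ^ n) :
    Tendsto (meanFunction a) (𝓝[<] r)
      (𝓝 ((∑' n : ℕ, (n : ℝ) * a n * r ^ n) / ∑' n, a n * r ^ n)) :=
  have hs0 := summable_mul_pow_of_summable_natCast_mul hs
  (tendsto_tsum_mul_pow_nhdsLT hr hs).div (tendsto_tsum_mul_pow_nhdsLT hr hs0)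
    (tsum_mul_pow_pos ha ha0 hr.le hs0).ne'

lemma tendsto_meanFunction_nhdsLT_atTop (ha : ∀ n, 0 ≤ a n) (ha0 : 0 < a 0) (hr : 0 < r)
    (hconv : ∀ t, 0 < t → t < r → Summable fun n => a n * t ^ n)
    (hdiv : ¬Summable fun n : ℕ => (n : ℝ) * a n * r ^ n) :
    Tendsto (meanFunction a) (𝓝[<] r) atTop := by
  have hconv' : ∀ t, 0 < t → t < r → Summable fun n : ℕ => (n : ℝ) * a n * t ^ n :=
    fun t ht htr =>
      have ⟨s, hts, hsr⟩ := exists_between htr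
      summable_natCast_mul_mul_pow_of_abs_lt ((abs_of_pos ht).trans_lt hts)
        (hconv s (ht.trans hts) hsr)
  by_cases hs : Summable fun n => a n * r ^ n
  · have hS1 := tendsto_tsum_mul_pow_nhdsLT_atTop (fun n => mul_nonneg n.cast_nonneg (ha n))
      hr hconv' hdiv
    refine tendsto_atTop_mono' _ ?_ (hS1.atTop_div_const (tsum_mul_pow_pos ha ha0 hr.le hs))
    filter_upwards [Ioo_mem_nhdsLT hr] with t ⟨ht, htr⟩
    have h0 := hconv t ht htr
    exact div_le_div_of_nonneg_left
      (tsum_nonneg fun n => mul_nonneg (mul_nonneg n.cast_nonneg (ha n)) (pow_nonneg ht.le n))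
      (tsum_mul_pow_pos ha ha0 ht.le h0)
      (h0.tsum_le_tsum (fun n => by gcongr; exact ha n) hs)
  · have hS0 := tendsto_tsum_mul_pow_nhdsLT_atTop ha hr hconv hs
    refine tendsto_meanFunction_atTop_of_two_mul_sum_range_le ha ha0 ?_ fun K => ?_
    · filter_upwards [Ioo_mem_nhdsLT hr] with t ⟨ht, htr⟩
      exact ⟨ht.le, hconv t ht htr, hconv' t ht htr⟩
    · filter_upwards [hS0.eventually_ge_atTop (2 * ∑ n ∈ range K, a n * r ^ n),
        Ioo_mem_nhdsLT hr] with t hK ⟨ht, htr⟩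
      refine le_trans ?_ hK
      gcongr with n
      exact ha n

lemma tendsto_meanFunction_atTop_atTop (ha : ∀ n, 0 ≤ a n) (ha0 : 0 < a 0)
    (hconv : ∀ t, 0 < t → Summable fun n => a n * t ^ n)
    (hinf : ∀ N, ∃ n, N < n ∧ a n ≠ 0) :
    Tendsto (meanFunction a) atTop atTop := by
  refine tendsto_meanFunction_atTop_of_two_mul_sum_range_le ha ha0 ?_ fun K => ?_
  · filter_upwards [eventually_gt_atTop 0] with t ht
    refine ⟨ht.le, hconv t ht, summable_natCast_mul_mul_pow_of_abs_lt (s := t + 1) ?_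
      (hconv _ (by linarith))⟩
    rw [abs_of_pos ht]
    exact lt_add_one t
  · obtain ⟨n₀, hKn₀, hn₀⟩ := hinf K
    have hpos : 0 < a n₀ := (ha n₀).lt_of_ne' hn₀
    set c := ∑ n ∈ range K, a n
    -- for `t ≥ 1` the head is at most `c tᴷ`, and `f(t) ≥ a n₀ tᴷ⁺¹ ≥ 2c tᴷ` once `t ≥ 2c / a n₀`
    filter_upwards [eventually_ge_atTop (max 1 (2 * c / a n₀))] with t ht
    have ht1 : 1 ≤ t := le_of_max_le_left ht
    have htc : 2 * c ≤ a n₀ * t := (div_le_iff₀' hpos).1 (le_of_max_le_right ht)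
    calc 2 * ∑ n ∈ range K, a n * t ^ n ≤ 2 * (c * t ^ K) := by
          rw [sum_mul]
          gcongr with n hn
          exacts [ha n, (mem_range.1 hn).le]
      _ ≤ a n₀ * t * t ^ K := by rw [← mul_assoc]; gcongr
      _ = a n₀ * t ^ (K + 1) := by ring
      _ ≤ a n₀ * t ^ n₀ := by gcongr; exact hKn₀
      _ ≤ ∑' n, a n * t ^ n := (hconv t (by linarith)).le_tsum n₀ fun n _ =>
          mul_nonneg (ha n) (pow_nonneg (by linarith) n)

lemma tendsto_meanFunction_atTop_of_degree {N : ℕ} (haN : a N ≠ 0)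
    (hdeg : ∀ n, N < n → a n = 0) :
    Tendsto (meanFunction a) atTop (𝓝 N) := by
  have h1 := tendsto_tsum_mul_pow_div_pow_atTop (b := fun n => (n : ℝ) * a n) (N := N)
    fun n hn => by simp [hdeg n hn]
  have hlim := h1.div (tendsto_tsum_mul_pow_div_pow_atTop hdeg) haN
  rw [mul_div_cancel_right₀ _ haN] at hlim
  refine hlim.congr' ?_
  filter_upwards [eventually_gt_atTop 0] with t ht
  exact div_div_div_cancel_right₀ (pow_ne_zero N ht.ne') _ _

lemma exists_tendsto_meanFunction_nhdsLT_iff (ha : ∀ n, 0 ≤ a n) (ha0 : 0 < a 0) (hr : 0 < r)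
    (hconv : ∀ t, 0 < t → t < r → Summable fun n => a n * t ^ n) :
    (∃ M, Tendsto (meanFunction a) (𝓝[<] r) (𝓝 M)) ↔
      Summable fun n : ℕ => (n : ℝ) * a n * r ^ n := by
  refine ⟨fun ⟨M, hM⟩ => ?_, fun hs => ⟨_, tendsto_meanFunction_nhdsLT ha ha0 hr hs⟩⟩
  by_contra hdiv
  exact not_tendsto_nhds_of_tendsto_atTop
    (tendsto_meanFunction_nhdsLT_atTop ha ha0 hr hconv hdiv) M hM

lemma exists_tendsto_meanFunction_atTop_iff (ha : ∀ n, 0 ≤ a n) (ha0 : 0 < a 0)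
    (hconv : ∀ t, 0 < t → Summable fun n => a n * t ^ n) :
    (∃ M, Tendsto (meanFunction a) atTop (𝓝 M)) ↔ ∃ N, ∀ n, N < n → a n = 0 := by
  refine ⟨fun ⟨M, hM⟩ => ?_, fun ⟨N, hN⟩ => ?_⟩
  · by_contra! hinf
    exact not_tendsto_nhds_of_tendsto_atTop
      (tendsto_meanFunction_atTop_atTop ha ha0 hconv hinf) M hM
  · obtain ⟨D, haD, hdeg⟩ := exists_last_ne_zero ha0.ne' hN
    exact ⟨D, tendsto_meanFunction_atTop_of_degree haD hdeg⟩

end MeanFunction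

theorem stmt_2_general (a : ℕ → ℝ) (R : ℝ≥0∞) (hR : 0 < R)
    (hnn : ∀ n, 0 ≤ a n) (h0 : 0 < a 0)
    (hrad : ∀ x : ℝ, 0 < x →
      (ENNReal.ofReal x < R → Summable (fun n => a n * x ^ n)) ∧
      (R < ENNReal.ofReal x → ¬ Summable (fun n => a n * x ^ n)))
    (m : ℝ → ℝ)
    (hm : ∀ t, m t = (∑' n : ℕ, (n : ℝ) * a n * t ^ n) / (∑' n : ℕ, a n * t ^ n))
    (l : Filter ℝ)
    (hl : l = if R = ⊤ then Filter.atTop else nhdsWithin R.toReal (Set.Iio R.toReal)) :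
    ((∃ M : ℝ, Filter.Tendsto m l (𝓝 M)) ↔
      ((R ≠ ⊤ ∧ Summable (fun n : ℕ => (n : ℝ) * a n * R.toReal ^ n)) ∨
       (R = ⊤ ∧ ∃ N : ℕ, ∀ n, N < n → a n = 0)))
    ∧ (R ≠ ⊤ → Summable (fun n : ℕ => (n : ℝ) * a n * R.toReal ^ n) →
        Filter.Tendsto m l
          (𝓝 ((∑' n : ℕ, (n : ℝ) * a n * R.toReal ^ n) / (∑' n : ℕ, a n * R.toReal ^ n))))
    ∧ (∀ N : ℕ, a N ≠ 0 → (∀ n, N < n → a n = 0) → Filter.Tendsto m l (𝓝 (N : ℝ))) := by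
  obtain rfl : m = meanFunction a := funext hm
  rcases eq_or_ne R ⊤ with rfl | hR_top
  · rw [if_pos rfl] at hl
    subst hl
    have hconv t (ht : 0 < t) := (hrad t ht).1 ENNReal.ofReal_lt_top
    refine ⟨?_, by simp, fun N haN hdeg => tendsto_meanFunction_atTop_of_degree haN hdeg⟩
    simpa using exists_tendsto_meanFunction_atTop_iff hnn h0 hconv
  · set r := R.toReal
    have hr : 0 < r := ENNReal.toReal_pos hR.ne' hR_top
    rw [if_neg hR_top] at hl
    subst hl
    have hconv t (ht : 0 < t) (htr : t < r) :=
      (hrad t ht).1 ((ENNReal.ofReal_lt_iff_lt_toReal ht.le hR_top).2 htr)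
    have hnot_poly N (hdeg : ∀ n, N < n → a n = 0) : False :=
      (hrad (r + 1) (by positivity)).2 ((ENNReal.lt_ofReal_iff_toReal_lt hR_top).2 (lt_add_one r))
        (summable_of_ne_finset_zero (s := range (N + 1)) fun n hn => by
          simp [hdeg n (by simpa using hn)])
    refine ⟨?_, fun _ => tendsto_meanFunction_nhdsLT hnn h0 hr,
      fun N _ hdeg => (hnot_poly N hdeg).elim⟩
    rw [exists_tendsto_meanFunction_nhdsLT_iff hnn h0 hr hconv]
    refine ⟨fun hs => Or.inl ⟨hR_top, hs⟩, ?_⟩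
    rintro (⟨-, hs⟩ | ⟨-, N, hdeg⟩)
    exacts [hs, (hnot_poly N hdeg).elim]

/-- Characterization of the finiteness of `M_f = lim_{t ↑ R} m(t)`, the limit of the
mean function of the Khinchin family of `f ∈ K`: `M_f < ∞` iff (`R < ∞` and
`Σ n aₙ Rⁿ < ∞`) or (`R = ∞` and `f` is a polynomial); in the first case
`M_f = (Σ n aₙ Rⁿ)/(Σ aₙ Rⁿ)`, and for a polynomial of degree `N`, `M_f = N`. -/
theorem stmt_2 (a : ℕ → ℝ) (R : ℝ≥0∞) (hR : 0 < R)
    (hnn : ∀ n, 0 ≤ a n) (h0 : 0 < a 0) (hnc : ∃ n, 1 ≤ n ∧ a n ≠ 0)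
    (hrad : ∀ x : ℝ, 0 < x →
      (ENNReal.ofReal x < R → Summable (fun n => a n * x ^ n)) ∧
      (R < ENNReal.ofReal x → ¬ Summable (fun n => a n * x ^ n)))
    (m : ℝ → ℝ)
    (hm : ∀ t, m t = (∑' n : ℕ, (n : ℝ) * a n * t ^ n) / (∑' n : ℕ, a n * t ^ n))
    (l : Filter ℝ)
    (hl : l = if R = ⊤ then Filter.atTop else nhdsWithin R.toReal (Set.Iio R.toReal)) :
    ((∃ M : ℝ, Filter.Tendsto m l (𝓝 M)) ↔
      ((R ≠ ⊤ ∧ Summable (fun n : ℕ => (n : ℝ) * a n * R.toReal ^ n)) ∨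
       (R = ⊤ ∧ ∃ N : ℕ, ∀ n, N < n → a n = 0)))
    ∧ (R ≠ ⊤ → Summable (fun n : ℕ => (n : ℝ) * a n * R.toReal ^ n) →
        Filter.Tendsto m l
          (𝓝 ((∑' n : ℕ, (n : ℝ) * a n * R.toReal ^ n) / (∑' n : ℕ, a n * R.toReal ^ n))))
    ∧ (∀ N : ℕ, a N ≠ 0 → (∀ n, N < n → a n = 0) → Filter.Tendsto m l (𝓝 (N : ℝ))) :=
  stmt_2_general a R hR hnn h0 hrad m hm l hl
end

section
/- Let ψ(z) = Σ b_j z^j be a nonconstant power series with nonnegative coefficients, b_0 > 0, b_1 > 0, and radius of convergence R > 0. Then for each θ_0 ∈ (0,π) there exist c > 0 and r > 0 such that |ψ(t e^{iθ})|/ψ(t) ≤ e^{−ct} whenever 0 < t ≤ r and θ_0 ≤ |θ| ≤ π. -/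
/-!
Split `ψ(z) = b₀ + b₁ z + (tail)`. On the circle `|z| = t` the tail is dominated by the
tail of `ψ(t)`, while `|b₀ + b₁ t e^{iθ}|² = (b₀ + b₁ t)² - 2 b₀ b₁ t (1 - cos θ)`, so the
linear part falls short of `b₀ + b₁ t` by at least `b₀ b₁ t (1 - cos θ) / ψ(t)`. For
`t ≤ r` monotonicity gives `ψ(t) ≤ ψ(r)`, so this deficit is at least `c t ψ(t)` with
`c = b₀ b₁ (1 - cos θ₀) / ψ(r)²`, and `1 - c t ≤ e^{-c t}`.
-/

open Finset in
theorem norm_tsum_le_norm_sum_range_add {E : Type*} [NormedAddCommGroup E] [CompleteSpace E]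
    {f : ℕ → E} (hf : Summable (‖f ·‖)) (n : ℕ) :
    ‖∑' j, f j‖ ≤ ‖∑ j ∈ range n, f j‖ + (∑' j, ‖f j‖ - ∑ j ∈ range n, ‖f j‖) := by
  have htail : ∑' j, ‖f j‖ - ∑ j ∈ range n, ‖f j‖ = ∑' j, ‖f (j + n)‖ := by
    rw [← hf.sum_add_tsum_nat_add n, add_sub_cancel_left]
  rw [← hf.of_norm.sum_add_tsum_nat_add n, htail]
  calc ‖∑ j ∈ range n, f j + ∑' j, f (j + n)‖
      ≤ ‖∑ j ∈ range n, f j‖ + ‖∑' j, f (j + n)‖ := norm_add_le _ _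
    _ ≤ ‖∑ j ∈ range n, f j‖ + ∑' j, ‖f (j + n)‖ := by
      gcongr
      exact norm_tsum_le_tsum_norm ((summable_nat_add_iff n).2 hf)

namespace Complex

theorem norm_ofReal_add_mul_exp_sq (a s θ : ℝ) :
    ‖(a : ℂ) + s * exp (I * θ)‖ ^ 2 = (a + s) ^ 2 - 2 * a * s * (1 - Real.cos θ) := by
  rw [mul_comm I, exp_mul_I, ← ofReal_cos, ← ofReal_sin, Complex.sq_norm, mul_add, ← mul_assoc,
    ← add_assoc, ← ofReal_mul, ← ofReal_mul, ← ofReal_add, normSq_add_mul_I]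
  linear_combination s ^ 2 * Real.sin_sq_add_cos_sq θ

theorem norm_ofReal_add_mul_exp_le {a s : ℝ} (ha : 0 ≤ a) (hs : 0 ≤ s) (has : 0 < a + s)
    (θ : ℝ) : ‖(a : ℂ) + s * exp (I * θ)‖ ≤ a + s - a * s * (1 - Real.cos θ) / (a + s) := by
  have hA0 := norm_nonneg ((a : ℂ) + s * exp (I * θ))
  have hA2 := norm_ofReal_add_mul_exp_sq a s θ
  have hD : 0 ≤ a * s * (1 - Real.cos θ) :=
    mul_nonneg (mul_nonneg ha hs) (sub_nonneg.2 (Real.cos_le_one θ))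
  have hAB : ‖(a : ℂ) + s * exp (I * θ)‖ ≤ a + s := by nlinarith
  have : a * s * (1 - Real.cos θ) / (a + s) ≤ a + s - ‖(a : ℂ) + s * exp (I * θ)‖ := by
    rw [div_le_iff₀ has]; nlinarith
  linarith

end Complex

section PowerSeries

variable {b : ℕ → ℝ}

theorem add_mul_le_tsum_mul_pow (hb : ∀ j, 0 ≤ b j) {x : ℝ} (hx : 0 ≤ x)
    (hs : Summable fun j => b j * x ^ j) : b 0 + b 1 * x ≤ ∑' j, b j * x ^ j := by
  simpa [Finset.sum_range_succ] using
    hs.sum_le_tsum (Finset.range 2) fun j _ => mul_nonneg (hb j) (pow_nonneg hx j)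

theorem tsum_mul_pow_le_tsum_mul_pow (hb : ∀ j, 0 ≤ b j) {x y : ℝ} (hx : 0 ≤ x) (hxy : x ≤ y)
    (hs : Summable fun j => b j * y ^ j) : ∑' j, b j * x ^ j ≤ ∑' j, b j * y ^ j := by
  have hle : ∀ j, b j * x ^ j ≤ b j * y ^ j := fun j =>
    mul_le_mul_of_nonneg_left (pow_le_pow_left₀ hx hxy j) (hb j)
  exact (hs.of_nonneg_of_le (fun j => mul_nonneg (hb j) (pow_nonneg hx j)) hle).tsum_le_tsum hle hs

open Complex in
theorem norm_tsum_mul_exp_le (hb : ∀ j, 0 ≤ b j) (h0 : 0 < b 0) {t : ℝ} (ht : 0 ≤ t)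
    (hs : Summable fun j => b j * t ^ j) (θ : ℝ) :
    ‖∑' j, (b j : ℂ) * (t * exp (I * θ)) ^ j‖ ≤
      ∑' j, b j * t ^ j - b 0 * b 1 * t * (1 - Real.cos θ) / ∑' j, b j * t ^ j := by
  set S := ∑' j, b j * t ^ j
  have hnorm : ∀ j, ‖(b j : ℂ) * (t * exp (I * θ)) ^ j‖ = b j * t ^ j := fun j => by
    rw [norm_mul, norm_pow, norm_mul, norm_exp_I_mul_ofReal, norm_real, norm_real,
      Real.norm_of_nonneg (hb j), Real.norm_of_nonneg ht, mul_one]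
  have hsplit := norm_tsum_le_norm_sum_range_add (hs.congr fun j => (hnorm j).symm) 2
  simp only [Finset.sum_range_succ, Finset.sum_range_zero, hnorm, zero_add, pow_zero, mul_one,
    pow_one, ← mul_assoc] at hsplit
  have hpos : 0 < b 0 + b 1 * t := add_pos_of_pos_of_nonneg h0 (mul_nonneg (hb 1) ht)
  have hlinear := norm_ofReal_add_mul_exp_le h0.le (mul_nonneg (hb 1) ht) hpos θ
  push_cast at hlinear
  have hdeficit : b 0 * b 1 * t * (1 - Real.cos θ) / S ≤
      b 0 * (b 1 * t) * (1 - Real.cos θ) / (b 0 + b 1 * t) := by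
    rw [← mul_assoc]
    refine div_le_div_of_nonneg_left ?_ hpos (add_mul_le_tsum_mul_pow hb ht hs)
    exact mul_nonneg (mul_nonneg (mul_nonneg h0.le (hb 1)) ht)
      (sub_nonneg.2 (Real.cos_le_one θ))
  linarith

end PowerSeries

theorem stmt_9_general (b : ℕ → ℝ) (R : ℝ) (hR : 0 < R)
    (hnn : ∀ j, 0 ≤ b j) (h0 : 0 < b 0) (h1 : 0 < b 1)
    (hsumC : ∀ z : ℂ, ‖z‖ < R → Summable (fun j => (b j : ℂ) * z ^ j))
    (ψC : ℂ → ℂ) (hψC : ∀ z, ψC z = ∑' j, (b j : ℂ) * z ^ j)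
    (ψ : ℝ → ℝ) (hψ : ∀ x, ψ x = ∑' j, b j * x ^ j) :
    ∀ θ₀ : ℝ, 0 < θ₀ → θ₀ < Real.pi →
      ∃ c > 0, ∃ r, 0 < r ∧ r < R ∧
        ∀ t θ : ℝ, 0 < t → t ≤ r → θ₀ ≤ |θ| → |θ| ≤ Real.pi →
          ‖ψC ((t : ℂ) * Complex.exp (Complex.I * θ))‖ ≤ Real.exp (-c * t) * ψ t := by
  intro θ₀ hθ₀ hθ₀π
  have hsum : ∀ x : ℝ, 0 ≤ x → x < R → Summable fun j => b j * x ^ j := fun x hx hxR =>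
    Complex.summable_ofReal.mp <| by
      simpa using hsumC x (by rwa [Complex.norm_real, Real.norm_of_nonneg hx])
  have hψpos : ∀ x : ℝ, 0 ≤ x → x < R → 0 < ψ x := fun x hx hxR => by
    have := add_mul_le_tsum_mul_pow hnn hx (hsum x hx hxR)
    rw [hψ]; linarith [mul_nonneg h1.le hx]
  have hr : 0 ≤ R / 2 := by positivity
  have hψr := hψpos _ hr (by linarith)
  have hs : 0 < 1 - Real.cos θ₀ := sub_pos.2 <| by
    simpa using Real.cos_lt_cos_of_nonneg_of_le_pi le_rfl hθ₀π.le hθ₀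
  set c := b 0 * b 1 * (1 - Real.cos θ₀) / ψ (R / 2) ^ 2
  refine ⟨c, by positivity, R / 2, by positivity, by linarith,
    fun t θ ht htr hθ₀θ hθπ => ?_⟩
  have hψt := hψpos t ht.le (by linarith)
  have hψtr : ψ t ≤ ψ (R / 2) := by
    simpa only [hψ] using tsum_mul_pow_le_tsum_mul_pow hnn ht.le htr (hsum _ hr (by linarith))
  have hcos : Real.cos θ ≤ Real.cos θ₀ := by
    simpa using Real.cos_le_cos_of_nonneg_of_le_pi hθ₀.le hθπ hθ₀θ
  have hbound := norm_tsum_mul_exp_le hnn h0 ht.le (hsum t ht.le (by linarith)) θ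
  rw [← hψC, ← hψ] at hbound
  have hdeficit : c * t * ψ t ≤ b 0 * b 1 * t * (1 - Real.cos θ) / ψ t := by
    have hratio : (ψ t / ψ (R / 2)) ^ 2 ≤ 1 :=
      pow_le_one₀ (by positivity) (div_le_one_of_le₀ hψtr hψr.le)
    rw [le_div_iff₀ hψt]
    calc c * t * ψ t * ψ t = b 0 * b 1 * t * (1 - Real.cos θ₀) * (ψ t / ψ (R / 2)) ^ 2 := by
          simp only [c]; ring
      _ ≤ b 0 * b 1 * t * (1 - Real.cos θ₀) * 1 := by gcongr
      _ ≤ b 0 * b 1 * t * (1 - Real.cos θ) := by rw [mul_one]; gcongr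
  calc _ ≤ (1 - c * t) * ψ t := by linarith
    _ ≤ Real.exp (-c * t) * ψ t := by
      gcongr
      linarith [Real.add_one_le_exp (-c * t)]

/-- If `ψ ∈ K` has `b₁ = ψ'(0) > 0`, then for each `θ₀ ∈ (0, π)` there are
`c > 0` and `r > 0` such that `|ψ(t e^{iθ})| ≤ e^{-ct} ψ(t)` whenever
`0 < t ≤ r` and `θ₀ ≤ |θ| ≤ π`. -/
theorem stmt_9 (b : ℕ → ℝ) (R : ℝ) (hR : 0 < R)
    (hnn : ∀ j, 0 ≤ b j) (h0 : 0 < b 0) (h1 : 0 < b 1)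
    (hnc : ∃ j, 1 ≤ j ∧ b j ≠ 0)
    (hsumC : ∀ z : ℂ, ‖z‖ < R → Summable (fun j => (b j : ℂ) * z ^ j))
    (ψC : ℂ → ℂ) (hψC : ∀ z, ψC z = ∑' j, (b j : ℂ) * z ^ j)
    (ψ : ℝ → ℝ) (hψ : ∀ x, ψ x = ∑' j, b j * x ^ j) :
    ∀ θ₀ : ℝ, 0 < θ₀ → θ₀ < Real.pi →
      ∃ c > 0, ∃ r, 0 < r ∧ r < R ∧
        ∀ t θ : ℝ, 0 < t → t ≤ r → θ₀ ≤ |θ| → |θ| ≤ Real.pi →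
          ‖ψC ((t : ℂ) * Complex.exp (Complex.I * θ))‖ ≤ Real.exp (-c * t) * ψ t :=
  stmt_9_general b R hR hnn h0 h1 hsumC ψC hψC ψ hψ
end

section
/- Let ψ(z) = Σ_{j≥0} b_j z^j be a power series with nonnegative coefficients and b_1 > 0, and let k ≥ 1 be a fixed integer. Then the k-th coefficient of ψ(z)^n satisfies coeff_[k](ψ^n) ~ C(n,k) b_0^{n−k} b_1^k as n → ∞ (k fixed). -/
/-!
Write `ψ = b₀ + z φ`. The binomial theorem gives the exact finite formula
`coeff_[k](ψⁿ) = Σ_{j ≤ k} C(n,j) b₀^{n-j} coeff_[k-j](φʲ)`, since `(zφ)ʲ` has no terms below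
degree `j`. The term `j = k` is `C(n,k) b₀^{n-k} b₁ᵏ`, and every other term is smaller by a
factor `C(n,j) / C(n,k) = O(n^{j-k})`.
-/

open Filter Topology PowerSeries Finset

theorem tendsto_choose_div_choose_atTop_zero {a c : ℕ} (hac : a < c) :
    Tendsto (fun n : ℕ => (n.choose a : ℝ) / n.choose c) atTop (𝓝 0) := by
  refine ((isEquivalent_choose a).div (isEquivalent_choose c)).symm.tendsto_nhds ?_
  have hpow : Tendsto (fun n : ℕ => (n : ℝ) ^ a / (n : ℝ) ^ c) atTop (𝓝 0) :=
    (tendsto_pow_div_pow_atTop_zero hac).comp tendsto_natCast_atTop_atTop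
  convert hpow.const_mul ((c.factorial : ℝ) / a.factorial) using 1
  · ext n
    simp only [Pi.div_apply]
    field_simp
  · simp

theorem tendsto_choose_mul_pow_div_choose_mul_pow_atTop_zero {x : ℝ} (hx : x ≠ 0) {j k : ℕ}
    (hjk : j < k) (c d : ℝ) :
    Tendsto (fun n : ℕ => (n.choose j : ℝ) * x ^ (n - j) * c / (n.choose k * x ^ (n - k) * d))
      atTop (𝓝 0) := by
  have h := (tendsto_choose_div_choose_atTop_zero hjk).mul_const (x ^ (k - j) * c / d)
  rw [zero_mul] at h
  refine h.congr' ?_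
  filter_upwards [eventually_ge_atTop k] with n hn
  have hchoose : (n.choose k : ℝ) ≠ 0 := by exact_mod_cast (Nat.choose_pos hn).ne'
  rw [show n - j = (n - k) + (k - j) by omega, pow_add]
  field_simp

theorem PowerSeries.coeff_C_add_X_mul_pow {R : Type*} [CommSemiring R] (a : R) (g : R⟦X⟧)
    (k n : ℕ) :
    coeff k ((C a + X * g) ^ n) =
      ∑ j ∈ range (k + 1), (n.choose j : R) * a ^ (n - j) * coeff (k - j) (g ^ j) := by
  rw [add_comm, add_pow, map_sum]
  have hterm : ∀ j, coeff k ((X * g) ^ j * C a ^ (n - j) * (n.choose j : R⟦X⟧)) =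
      if j ≤ k then (n.choose j : R) * a ^ (n - j) * coeff (k - j) (g ^ j) else 0 := by
    intro j
    rw [mul_pow, ← map_pow, ← map_natCast (C (R := R)), mul_assoc, mul_assoc, ← map_mul,
      coeff_X_pow_mul', coeff_mul_C]
    split_ifs <;> ring
  simp_rw [hterm]
  rw [sum_ite, sum_const_zero, add_zero]
  -- the binomial sum runs over `j ≤ n`; the terms with `n < j ≤ k` vanish since `C(n,j) = 0`
  refine sum_subset (fun j hj => by simp at hj ⊢; omega) fun j hjk hjn => ?_
  have hnj : n < j := by simp at hjk hjn; omega
  simp [Nat.choose_eq_zero_of_lt hnj]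

theorem stmt_12_general (b : ℕ → ℝ) (h0 : 0 < b 0) (h1 : 0 < b 1)
    (k : ℕ) :
    Filter.Tendsto (fun n : ℕ =>
        (PowerSeries.coeff k ((PowerSeries.mk b) ^ n)) /
          ((n.choose k : ℝ) * b 0 ^ (n - k) * b 1 ^ k)) Filter.atTop (𝓝 1) := by
  set φ : ℝ⟦X⟧ := mk fun j => b (j + 1)
  have hψ : mk b = C (b 0) + X * φ := by
    rw [add_comm]
    simpa using eq_X_mul_shift_add_const (mk b)
  have hlower : ∀ j ∈ range k, Tendsto (fun n : ℕ => (n.choose j : ℝ) * b 0 ^ (n - j) *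
      coeff (k - j) (φ ^ j) / (n.choose k * b 0 ^ (n - k) * b 1 ^ k)) atTop (𝓝 0) :=
    fun j hj => tendsto_choose_mul_pow_div_choose_mul_pow_atTop_zero h0.ne' (mem_range.mp hj) _ _
  have hleading : ∀ᶠ n : ℕ in atTop, 1 = (n.choose k : ℝ) * b 0 ^ (n - k) *
      coeff (k - k) (φ ^ k) / (n.choose k * b 0 ^ (n - k) * b 1 ^ k) := by
    filter_upwards [eventually_ge_atTop k] with n hn
    have hchoose : (n.choose k : ℝ) ≠ 0 := by exact_mod_cast (Nat.choose_pos hn).ne'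
    simp [φ, coeff_zero_eq_constantCoeff, h0.ne', h1.ne', hchoose]
  simp_rw [hψ, coeff_C_add_X_mul_pow, sum_range_succ, add_div, sum_div]
  simpa using (tendsto_finsetSum _ hlower).add (tendsto_const_nhds.congr' hleading)

/-- For `ψ(z) = Σ bⱼ zʲ` with nonnegative coefficients, `b₀ > 0` and `b₁ > 0`,
and fixed `k ≥ 1`, the `k`-th coefficient of `ψ(z)^n` satisfies
`coeff_[k](ψⁿ) ~ C(n,k) b₀^{n−k} b₁^k` as `n → ∞`. -/
theorem stmt_12 (b : ℕ → ℝ) (hnn : ∀ j, 0 ≤ b j) (h0 : 0 < b 0) (h1 : 0 < b 1)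
    (k : ℕ) (hk : 1 ≤ k) :
    Filter.Tendsto (fun n : ℕ =>
        (PowerSeries.coeff k ((PowerSeries.mk b) ^ n)) /
          ((n.choose k : ℝ) * b 0 ^ (n - k) * b 1 ^ k)) Filter.atTop (𝓝 1) :=
  stmt_12_general b h0 h1 k
end

section
/- Let f be a nonconstant power series with nonnegative coefficients, f(0) > 0, radius of convergence R > 0, and Khinchin family (X_t). Suppose f is Gaussian, i.e., the normalized variables X̂_t = (X_t − m(t))/σ(t) converge in distribution to the standard normal as t ↑ R. Then M_f = lim_{t↑R} m(t) = +∞. -/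
/-!
Suppose `m(t) < C` along points `t ↑ R`. By Markov's inequality the Khinchin variable `X_t`
then puts mass at least `1/2` on `{0, …, M - 1}` with `M = ⌈2C⌉ + 1`, so some atom
`P(X_t = K)` is at least `1/(2M)`. On the other hand, for any discrete law with characteristic
function `φ`, positive definiteness gives `N² P(X = x_K) ≤ ∑_{k,k' < N} |φ((k - k')h)|`; for a
Gaussian limit the right side tends to `∑_{k,k'} e^{-(k-k')²h²/2} ≤ N + 1` for a suitable `h`,
so all atoms of `X̂_t` (which are those of `X_t`) become uniformly small as `t ↑ R`,
contradicting the first estimate.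
-/

open Filter Topology Finset
open scoped ENNReal

/-- The characteristic function `θ ↦ ∑ₙ p n e^{iθ x n}` of the measure `∑ₙ p n δ_{x n}`. -/
noncomputable def charSum (p x : ℕ → ℝ) (θ : ℝ) : ℂ :=
  ∑' n, (p n : ℂ) * Complex.exp (Complex.I * θ * x n)

lemma norm_charSum_sub_const (p x : ℕ → ℝ) (c θ : ℝ) :
    ‖charSum p (fun n => x n - c) θ‖ = ‖charSum p x θ‖ := by
  have : charSum p (fun n => x n - c) θ =
      charSum p x θ * Complex.exp (-(Complex.I * θ * c)) := by
    rw [charSum, charSum, ← tsum_mul_right]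
    refine tsum_congr fun n => ?_
    rw [mul_assoc _ (Complex.exp _), ← Complex.exp_add]
    push_cast
    ring_nf
  rw [this, norm_mul, Complex.norm_exp]
  simp

lemma sum_range_sum_range_charSum (p x : ℕ → ℝ) (hp : Summable p) (N : ℕ) (h : ℝ) :
    ∑ k ∈ range N, ∑ k' ∈ range N, charSum p x ((k - k' : ℝ) * h) =
      ∑' n, ((p n * Complex.normSq
        (∑ k ∈ range N, Complex.exp (Complex.I * (k * h : ℝ) * x n)) : ℝ) : ℂ) := by
  set e : ℕ → ℕ → ℂ := fun k n => Complex.exp (Complex.I * (k * h : ℝ) * x n)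
  have hterm : ∀ k k' n : ℕ,
      (p n : ℂ) * Complex.exp (Complex.I * ((k - k' : ℝ) * h : ℝ) * x n) =
        p n * (e k n * starRingEnd ℂ (e k' n)) := by
    intro k k' n
    simp only [e, ← Complex.exp_conj, ← Complex.exp_add, map_mul, Complex.conj_I,
      Complex.conj_ofReal]
    push_cast
    ring_nf
  have hsummable :
      ∀ k k', Summable fun n => (p n : ℂ) * (e k n * starRingEnd ℂ (e k' n)) := by
    intro k k'
    refine Summable.of_norm_bounded hp.abs fun n => ?_
    simp [e, Complex.norm_exp]
  calc ∑ k ∈ range N, ∑ k' ∈ range N, charSum p x ((k - k' : ℝ) * h)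
      = ∑ k ∈ range N, ∑' n, ∑ k' ∈ range N,
          (p n : ℂ) * (e k n * starRingEnd ℂ (e k' n)) := by
        refine sum_congr rfl fun k _ => ?_
        rw [Summable.tsum_finsetSum fun k' _ => hsummable k k']
        simp only [charSum, hterm]
    _ = ∑' n, (p n : ℂ) *
          ((∑ k ∈ range N, e k n) * starRingEnd ℂ (∑ k ∈ range N, e k n)) := by
        rw [← Summable.tsum_finsetSum fun k _ => summable_sum fun k' _ => hsummable k k']
        refine tsum_congr fun n => ?_
        rw [map_sum, sum_mul_sum, mul_sum]
        simp_rw [mul_sum]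
    _ = _ := by
        refine tsum_congr fun n => ?_
        rw [Complex.mul_conj, ← Complex.ofReal_mul]

/- Shifting the points so that `x K = 0` does not change `‖charSum‖`, and it makes the `n = K`
term of the nonnegative series `∑ₙ p n |∑_{k<N} e^{ikh x n}|²` equal to `N² p K`. -/
lemma sq_mul_le_sum_range_sum_range_norm_charSum (p x : ℕ → ℝ) (hp : ∀ n, 0 ≤ p n)
    (hps : Summable p) (N K : ℕ) (h : ℝ) :
    (N : ℝ) ^ 2 * p K ≤ ∑ k ∈ range N, ∑ k' ∈ range N, ‖charSum p x ((k - k' : ℝ) * h)‖ := by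
  set y : ℕ → ℝ := fun n => x n - x K
  set D : ℕ → ℂ := fun n => ∑ k ∈ range N, Complex.exp (Complex.I * (k * h : ℝ) * y n)
  have hD : ∀ n, 0 ≤ p n * Complex.normSq (D n) := fun n =>
    mul_nonneg (hp n) (Complex.normSq_nonneg _)
  have hDK : D K = N := by simp [D, y]
  have hsum : Summable fun n => p n * Complex.normSq (D n) := by
    refine Summable.of_nonneg_of_le hD (fun n => ?_) (hps.mul_right ((N : ℝ) ^ 2))
    have hDn : ‖D n‖ ≤ N := (norm_sum_le _ _).trans (by simp [Complex.norm_exp])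
    rw [Complex.normSq_eq_norm_sq]
    gcongr
    exact hp n
  calc (N : ℝ) ^ 2 * p K = p K * Complex.normSq (D K) := by
        rw [hDK, Complex.normSq_natCast]; ring
    _ ≤ ∑' n, p n * Complex.normSq (D n) := hsum.le_tsum K fun n _ => hD n
    _ = ‖∑ k ∈ range N, ∑ k' ∈ range N, charSum p y ((k - k' : ℝ) * h)‖ := by
        rw [sum_range_sum_range_charSum p y hps, ← Complex.ofReal_tsum, Complex.norm_real,
          Real.norm_of_nonneg (tsum_nonneg hD)]
    _ ≤ ∑ k ∈ range N, ∑ k' ∈ range N, ‖charSum p y ((k - k' : ℝ) * h)‖ :=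
        (norm_sum_le _ _).trans (sum_le_sum fun k _ => norm_sum_le _ _)
    _ = _ := by simp only [y, norm_charSum_sub_const]

lemma exists_sum_range_sum_range_exp_neg_sq_le (N : ℕ) :
    ∃ h : ℝ, ∑ k ∈ range N, ∑ k' ∈ range N, Real.exp (-((k - k' : ℝ) * h) ^ 2 / 2) ≤ N + 1 := by
  set δ : ℝ := ((N : ℝ) ^ 2 + 1)⁻¹
  have hlog : 0 ≤ 2 * Real.log ((N : ℝ) ^ 2 + 1) := by
    have := Real.log_nonneg (le_add_of_nonneg_left (sq_nonneg (N : ℝ)))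
    positivity
  refine ⟨Real.sqrt (2 * Real.log ((N : ℝ) ^ 2 + 1)), ?_⟩
  set h := Real.sqrt (2 * Real.log ((N : ℝ) ^ 2 + 1))
  have hexp : Real.exp (-h ^ 2 / 2) = δ := by
    rw [Real.sq_sqrt hlog, neg_div, mul_div_cancel_left₀ _ two_ne_zero, Real.exp_neg,
      Real.exp_log (by positivity)]
  have hterm : ∀ k k' : ℕ,
      Real.exp (-((k - k' : ℝ) * h) ^ 2 / 2) ≤ (if k = k' then 1 else 0) + δ := by
    intro k k'
    by_cases hkk : k = k'
    · subst hkk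
      simp [δ]
      positivity
    · have hsq : 1 ≤ ((k - k' : ℝ)) ^ 2 := by
        have : (1 : ℝ) ≤ |(k - k' : ℝ)| := by
          exact_mod_cast Int.one_le_abs (sub_ne_zero.2 (Int.ofNat_inj.not.2 hkk))
        nlinarith [sq_abs (k - k' : ℝ)]
      rw [if_neg hkk, zero_add, ← hexp, Real.exp_le_exp, mul_pow]
      nlinarith [sq_nonneg h]
  calc ∑ k ∈ range N, ∑ k' ∈ range N, Real.exp (-((k - k' : ℝ) * h) ^ 2 / 2)
      ≤ ∑ k ∈ range N, ∑ k' ∈ range N, ((if k = k' then 1 else 0) + δ) :=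
        sum_le_sum fun k _ => sum_le_sum fun k' _ => hterm k k'
    _ = N + (N : ℝ) ^ 2 * δ := by
        simp only [sum_add_distrib, sum_ite_eq, sum_const, card_range, nsmul_eq_mul]
        rw [sum_ite_of_true fun _ hk => hk, sum_const, card_range]
        ring
    _ ≤ N + 1 := by
        gcongr
        rw [← div_eq_mul_inv, div_le_one (by positivity)]
        linarith

lemma eventually_lt_of_tendsto_charSum_gaussian {ι : Type*} {l : Filter ι} (p x : ι → ℕ → ℝ)
    (hp : ∀ᶠ t in l, (∀ n, 0 ≤ p t n) ∧ Summable (p t))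
    (hgauss : ∀ θ : ℝ,
      Tendsto (fun t => charSum (p t) (x t) θ) l (𝓝 ((Real.exp (-θ ^ 2 / 2) : ℝ) : ℂ)))
    {ε : ℝ} (hε : 0 < ε) : ∀ᶠ t in l, ∀ K, p t K < ε := by
  obtain ⟨N, hN⟩ := exists_nat_gt (3 / ε)
  have hNε : 3 < N * ε := (div_lt_iff₀ hε).1 hN
  have hN1 : (1 : ℝ) ≤ N := by
    rcases N.eq_zero_or_pos with rfl | hN0
    · norm_num at hNε
    · exact_mod_cast hN0
  obtain ⟨h, hh⟩ := exists_sum_range_sum_range_exp_neg_sq_le N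
  have hlim : Tendsto (fun t => ∑ k ∈ range N, ∑ k' ∈ range N,
      ‖charSum (p t) (x t) ((k - k' : ℝ) * h)‖) l
      (𝓝 (∑ k ∈ range N, ∑ k' ∈ range N, Real.exp (-((k - k' : ℝ) * h) ^ 2 / 2))) := by
    refine tendsto_finsetSum _ fun k _ => tendsto_finsetSum _ fun k' _ => ?_
    simpa only [Complex.norm_real, Real.norm_of_nonneg (Real.exp_pos _).le]
      using (hgauss ((k - k' : ℝ) * h)).norm
  filter_upwards [hp, hlim.eventually_lt_const (show _ < (N : ℝ) + 2 by linarith)]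
    with t ⟨hpn, hps⟩ hlt K
  have hK := sq_mul_le_sum_range_sum_range_norm_charSum (p t) (x t) hpn hps N K h
  have : (N : ℝ) ^ 2 * p t K < (N : ℝ) ^ 2 * ε := by nlinarith
  exact lt_of_mul_lt_mul_left this (by positivity)

lemma exists_lt_tsum_le_two_mul_mul (p : ℕ → ℝ) (hp : ∀ n, 0 ≤ p n) (hs : Summable p)
    (hs₁ : Summable fun n => n * p n) {M : ℕ} (hM : 0 < M)
    (hmean : 2 * ∑' n, n * p n ≤ M * ∑' n, p n) : ∃ K < M, ∑' n, p n ≤ 2 * M * p K := by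
  set T := ∑' i, p (i + M)
  have hsplit : ∑ i ∈ range M, p i + T = ∑' n, p n := hs.sum_add_tsum_nat_add M
  have htail : M * T ≤ ∑' n, n * p n := by
    calc M * T = ∑' i, (M : ℝ) * p (i + M) := tsum_mul_left.symm
      _ ≤ ∑' i, ((i + M : ℕ) : ℝ) * p (i + M) := by
          refine Summable.tsum_le_tsum (fun i => ?_) (((summable_nat_add_iff M).2 hs).mul_left _)
            ((summable_nat_add_iff M).2 hs₁)
          gcongr
          · exact hp _
          · exact_mod_cast Nat.le_add_left M i
      _ ≤ ∑' n, n * p n := by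
          rw [← hs₁.sum_add_tsum_nat_add M]
          exact le_add_of_nonneg_left (sum_nonneg fun i _ => mul_nonneg i.cast_nonneg (hp i))
  have hhead : ∑' n, p n ≤ 2 * ∑ i ∈ range M, p i := by
    have : (M : ℝ) * T ≤ M * ∑ i ∈ range M, p i := by nlinarith
    have := le_of_mul_le_mul_left this (by exact_mod_cast hM)
    linarith
  obtain ⟨K, hK, hle⟩ := exists_le_of_sum_le (nonempty_range_iff.2 hM.ne')
    (f := fun _ => (∑' n, p n) / (2 * M)) (g := p) (by
      rw [sum_const, card_range, nsmul_eq_mul]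
      field_simp
      linarith)
  refine ⟨K, mem_range.1 hK, ?_⟩
  rw [div_le_iff₀ (by positivity)] at hle
  linarith

lemma summable_natCast_mul_mul_pow_of_lt (a : ℕ → ℝ) {t t' : ℝ} (htt' : |t| < t')
    (hs : Summable fun n => a n * t' ^ n) : Summable fun n : ℕ => (n : ℝ) * (a n * t ^ n) := by
  have ht' : 0 < t' := (abs_nonneg t).trans_lt htt'
  have hq : ‖|t| / t'‖ < 1 := by
    rw [Real.norm_of_nonneg (by positivity)]
    exact (div_lt_one ht').2 htt'
  refine (summable_pow_mul_geometric_of_norm_lt_one 1 hq).of_norm_bounded_eventually_nat ?_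
  filter_upwards [(tendsto_zero_iff_norm_tendsto_zero.1 hs.tendsto_atTop_zero).eventually_lt_const
    one_pos] with n hn
  calc ‖(n : ℝ) * (a n * t ^ n)‖ = ‖a n * t' ^ n‖ * ((n : ℝ) ^ 1 * (|t| / t') ^ n) := by
        simp only [norm_mul, norm_pow, Real.norm_eq_abs, Nat.abs_cast, abs_of_pos ht', div_pow,
          pow_one]
        field_simp
    _ ≤ 1 * ((n : ℝ) ^ 1 * (|t| / t') ^ n) := by gcongr
    _ = _ := one_mul _

lemma summable_natCast_mul_mul_pow_of_ofReal_lt (a : ℕ → ℝ) {R : ℝ≥0∞}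
    (hrad : ∀ x : ℝ, 0 < x → ENNReal.ofReal x < R → Summable fun n => a n * x ^ n)
    {t : ℝ} (ht : 0 < t) (htR : ENNReal.ofReal t < R) :
    Summable fun n : ℕ => (n : ℝ) * (a n * t ^ n) := by
  obtain ⟨r, htr, hrR⟩ := exists_between htR
  have hr : r ≠ ⊤ := hrR.ne_top
  have htr' : t < r.toReal := (ENNReal.ofReal_lt_iff_lt_toReal ht.le hr).1 htr
  refine summable_natCast_mul_mul_pow_of_lt a (by rwa [abs_of_pos ht]) ?_
  exact hrad _ (ht.trans htr') (by rwa [ENNReal.ofReal_toReal hr])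

lemma eventually_pos_ofReal_lt {R : ℝ≥0∞} (hR : 0 < R) :
    ∀ᶠ t in (if R = ⊤ then atTop else 𝓝[<] R.toReal), 0 < t ∧ ENNReal.ofReal t < R := by
  split_ifs with hR'
  · filter_upwards [eventually_gt_atTop 0] with t ht
    exact ⟨ht, hR' ▸ ENNReal.ofReal_lt_top⟩
  · have hr : 0 < R.toReal := ENNReal.toReal_pos hR.ne' hR'
    filter_upwards [self_mem_nhdsWithin, nhdsWithin_le_nhds (Ioi_mem_nhds hr)]
      with t (htR : t < R.toReal) (ht : 0 < t)
    exact ⟨ht, (ENNReal.ofReal_lt_iff_lt_toReal ht.le hR').2 htR⟩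

theorem stmt_19_general (a : ℕ → ℝ) (R : ℝ≥0∞) (hR : 0 < R)
    (hnn : ∀ n, 0 ≤ a n) (h0 : 0 < a 0)
    (hrad : ∀ x : ℝ, 0 < x →
      (ENNReal.ofReal x < R → Summable (fun n => a n * x ^ n)) ∧
      (R < ENNReal.ofReal x → ¬ Summable (fun n => a n * x ^ n)))
    (f : ℝ → ℝ) (hf : ∀ x, f x = ∑' n, a n * x ^ n)
    (m : ℝ → ℝ) (hm : ∀ t, m t = (∑' n : ℕ, (n : ℝ) * a n * t ^ n) / f t)
    (σ : ℝ → ℝ)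
    (χ : ℝ → ℝ → ℂ)
    (hχ : ∀ t θ, χ t θ = (∑' n : ℕ, ((a n * t ^ n : ℝ) : ℂ) *
        Complex.exp (Complex.I * θ * (((n : ℝ) - m t) / σ t))) / ((f t : ℝ) : ℂ))
    (l : Filter ℝ)
    (hl : l = if R = ⊤ then Filter.atTop else nhdsWithin R.toReal (Set.Iio R.toReal))
    (hgauss : ∀ θ : ℝ,
      Filter.Tendsto (fun t => χ t θ) l (𝓝 ((Real.exp (-θ ^ 2 / 2) : ℝ) : ℂ))) :
    Filter.Tendsto m l Filter.atTop := by
  have hsum : ∀ {t}, 0 < t → ENNReal.ofReal t < R → Summable fun n => a n * t ^ n :=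
    fun ht htR => (hrad _ ht).1 htR
  have hf_pos : ∀ {t}, 0 < t → ENNReal.ofReal t < R → 0 < f t := fun ht htR =>
    (hf _).symm ▸ (hsum ht htR).tsum_pos (fun n => mul_nonneg (hnn n) (pow_nonneg ht.le n)) 0
      (by simpa using h0)
  have hχ_eq :
      χ = fun t θ => charSum (fun n => a n * t ^ n / f t) (fun n => (n - m t) / σ t) θ := by
    ext t θ
    rw [hχ, charSum, ← tsum_div_const]
    refine tsum_congr fun n => ?_
    push_cast
    ring
  have hgood : ∀ᶠ t in l, 0 < t ∧ ENNReal.ofReal t < R := hl ▸ eventually_pos_ofReal_lt hR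
  have hatoms (M : ℕ) (hM : 0 < M) : ∀ᶠ t in l, ∀ K, a K * t ^ K / f t < 1 / (2 * M) := by
    refine eventually_lt_of_tendsto_charSum_gaussian _ _ ?_ (hχ_eq ▸ hgauss) (by positivity)
    filter_upwards [hgood] with t ⟨ht, htR⟩
    exact ⟨fun n => div_nonneg (mul_nonneg (hnn n) (pow_nonneg ht.le n)) (hf_pos ht htR).le,
      (hsum ht htR).div_const _⟩
  refine tendsto_atTop.2 fun C => ?_
  by_contra hC
  set M := ⌈2 * C⌉₊ + 1
  have hM : 0 < M := Nat.succ_pos _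
  obtain ⟨t, hmt, ⟨ht, htR⟩, hsmall⟩ :=
    ((not_eventually.1 hC).and_eventually (hgood.and (hatoms M hM))).exists
  have hft := hf_pos ht htR
  have hmean : 2 * ∑' n : ℕ, n * (a n * t ^ n) ≤ M * ∑' n, a n * t ^ n := by
    simp_rw [← mul_assoc]
    rw [not_le, hm, div_lt_iff₀ hft] at hmt
    have h2C : 2 * C ≤ M := (Nat.le_ceil _).trans (Nat.cast_le.2 (Nat.le_succ _))
    rw [← hf]
    nlinarith
  obtain ⟨K, -, hK⟩ := exists_lt_tsum_le_two_mul_mul (fun n => a n * t ^ n)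
    (fun n => mul_nonneg (hnn n) (pow_nonneg ht.le n)) (hsum ht htR)
    (summable_natCast_mul_mul_pow_of_ofReal_lt a (fun x hx => (hrad x hx).1) ht htR) hM hmean
  have := hsmall K
  rw [← hf] at hK
  rw [div_lt_div_iff₀ hft (by positivity)] at this
  linarith

/-- If `f ∈ K` is Gaussian, i.e. the characteristic functions of the normalized
Khinchin variables `X̂_t = (X_t − m(t))/σ(t)` converge pointwise to `e^{−θ²/2}`
as `t ↑ R`, then `M_f = lim_{t ↑ R} m(t) = +∞`. -/
theorem stmt_19 (a : ℕ → ℝ) (R : ℝ≥0∞) (hR : 0 < R)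
    (hnn : ∀ n, 0 ≤ a n) (h0 : 0 < a 0) (hnc : ∃ n, 1 ≤ n ∧ a n ≠ 0)
    (hrad : ∀ x : ℝ, 0 < x →
      (ENNReal.ofReal x < R → Summable (fun n => a n * x ^ n)) ∧
      (R < ENNReal.ofReal x → ¬ Summable (fun n => a n * x ^ n)))
    (f : ℝ → ℝ) (hf : ∀ x, f x = ∑' n, a n * x ^ n)
    (m : ℝ → ℝ) (hm : ∀ t, m t = (∑' n : ℕ, (n : ℝ) * a n * t ^ n) / f t)
    (σ : ℝ → ℝ)
    (hσ : ∀ t, σ t = Real.sqrt ((∑' n : ℕ, (n : ℝ) ^ 2 * a n * t ^ n) / f t - m t ^ 2))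
    (χ : ℝ → ℝ → ℂ)
    (hχ : ∀ t θ, χ t θ = (∑' n : ℕ, ((a n * t ^ n : ℝ) : ℂ) *
        Complex.exp (Complex.I * θ * (((n : ℝ) - m t) / σ t))) / ((f t : ℝ) : ℂ))
    (l : Filter ℝ)
    (hl : l = if R = ⊤ then Filter.atTop else nhdsWithin R.toReal (Set.Iio R.toReal))
    (hgauss : ∀ θ : ℝ,
      Filter.Tendsto (fun t => χ t θ) l (𝓝 ((Real.exp (-θ ^ 2 / 2) : ℝ) : ℂ))) :
    Filter.Tendsto m l Filter.atTop :=
  stmt_19_general a R hR hnn h0 hrad f hf m hm σ χ hχ l hl hgauss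
end
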